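/- arXiv:2211.08746 — 2 statements merged into one kernel-verified Lean document; each statement's English description precedes it below -/
import Mathlib

section
/- For every natural number n, define I(m) = ∑_{j=0}^{⌊m/2⌋} C(m, 2j) · (2j−1)!!, the number of partial matchings of an m-element set. Then I(2n) = ∑_{k=0}^{n} k! · C(n,k)² · I(n−k)², where C denotes the binomial coefficient and (2j−1)!! = ∏_{i=1}^{j} (2i−1) with the empty product equal to 1. -/
/-- The odd double factorial `(2j−1)!! = ∏_{i=1}^{j} (2i−1)`, with the empty product equal
to `1`. -/
def oddDoubleFactorial (j : ℕ) : ℕ := ∏ i ∈ Finset.range j, (2 * i + 1)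

/-- `I(m) = ∑_{j=0}^{⌊m/2⌋} C(m, 2j) · (2j−1)!!`, the number of partial matchings of an
`m`-element set. -/
def partialMatchings (m : ℕ) : ℕ :=
  ∑ j ∈ Finset.range (m / 2 + 1), m.choose (2 * j) * oddDoubleFactorial j

/-!
Split a `2n`-element set into two halves of size `n`. A partial matching with exactly `k`
edges between the halves is an injection between `k`-subsets of the halves, `k! · C(n,k)²`
choices, together with a partial matching of each remainder, so `I(2n)` is the stated sum.
Algebraically, `I(m + n) = ∑ₖ m^(k) · C(n,k) · I(m-k) · I(n-k)` (falling factorial `m^(k)`)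
follows by induction on `n`: both sides satisfy the recurrence coming from
`I(a+1) = I(a) + a · I(a-1)`, where the new element is either unmatched or matched to one of
the other `a`.
-/

open Finset

lemma partialMatchings_eq_sum_range {m N : ℕ} (h : m / 2 + 1 ≤ N) :
    partialMatchings m = ∑ j ∈ range N, m.choose (2 * j) * oddDoubleFactorial j :=
  (eventually_constant_sum
    (fun j hj => by rw [Nat.choose_eq_zero_of_lt (by omega), zero_mul]) h).symm

lemma oddDoubleFactorial_succ (j : ℕ) :
    oddDoubleFactorial (j + 1) = (2 * j + 1) * oddDoubleFactorial j := by
  rw [oddDoubleFactorial, prod_range_succ, mul_comm, oddDoubleFactorial]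

lemma partialMatchings_add_two (a : ℕ) :
    partialMatchings (a + 2) = partialMatchings (a + 1) + (a + 1) * partialMatchings a := by
  have hterm (j : ℕ) :
      (a + 2).choose (2 * (j + 1)) * oddDoubleFactorial (j + 1)
        = (a + 1).choose (2 * (j + 1)) * oddDoubleFactorial (j + 1)
          + (a + 1) * (a.choose (2 * j) * oddDoubleFactorial j) := by
    rw [show 2 * (j + 1) = 2 * j + 1 + 1 by ring, Nat.choose_succ_succ', oddDoubleFactorial_succ,
      ← mul_assoc (a + 1), Nat.add_one_mul_choose_eq]
    ring
  rw [partialMatchings_eq_sum_range (N := a + 3) (by omega),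
    partialMatchings_eq_sum_range (m := a + 1) (N := a + 3) (by omega),
    partialMatchings_eq_sum_range (m := a) (N := a + 2) (by omega),
    sum_range_succ', sum_range_succ' (fun j => (a + 1).choose (2 * j) * _),
    sum_congr rfl fun j _ => hterm j, sum_add_distrib, mul_sum]
  simp only [mul_zero, Nat.choose_zero_right]
  ring

lemma partialMatchings_succ (a : ℕ) :
    partialMatchings (a + 1) = partialMatchings a + a * partialMatchings (a - 1) := by
  rcases a with _ | a
  · rfl
  · exact partialMatchings_add_two a

lemma sub_mul_choose (n k : ℕ) : (n - k) * n.choose k = n * (n - 1).choose k := by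
  rcases n with _ | n
  · simp
  · rw [Nat.add_sub_cancel, mul_comm, ← Nat.choose_mul_succ_eq, mul_comm]

lemma choose_mul_partialMatchings_succ_sub (n k : ℕ) :
    n.choose k * partialMatchings (n + 1 - k)
      = n.choose k * partialMatchings (n - k)
        + n * ((n - 1).choose k * partialMatchings (n - 1 - k)) := by
  rcases le_or_gt k n with hk | hk
  · rw [show n + 1 - k = n - k + 1 by omega, partialMatchings_succ,
      show n - k - 1 = n - 1 - k by omega, mul_add, ← mul_assoc n, ← sub_mul_choose]
    ring
  · simp [Nat.choose_eq_zero_of_lt hk, Nat.choose_eq_zero_of_lt (show n - 1 < k by omega)]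

lemma descFactorial_succ_eq_mul (m k : ℕ) :
    m.descFactorial (k + 1) = m * (m - 1).descFactorial k := by
  rcases m with _ | m
  · simp
  · exact Nat.succ_descFactorial_succ m k

/-- Partial matchings of an `m`-set ⊔ an `n`-set with exactly `k` edges between the two parts. -/
def crossMatchings (m n k : ℕ) : ℕ :=
  m.descFactorial k * partialMatchings (m - k) * (n.choose k * partialMatchings (n - k))

def sumCrossMatchings (m n : ℕ) : ℕ :=
  ∑ k ∈ range (n + 1), crossMatchings m n k

lemma sum_range_crossMatchings {m n N : ℕ} (h : n + 1 ≤ N) :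
    ∑ k ∈ range N, crossMatchings m n k = sumCrossMatchings m n :=
  eventually_constant_sum
    (fun k hk => by simp [crossMatchings, Nat.choose_eq_zero_of_lt (show n < k by omega)]) h

lemma sumCrossMatchings_succ (m n : ℕ) :
    sumCrossMatchings m (n + 1)
      = sumCrossMatchings m n + m * sumCrossMatchings (m - 1) n
        + n * sumCrossMatchings m (n - 1) := by
  set g : ℕ → ℕ := fun k =>
    m.descFactorial k * partialMatchings (m - k) * (n.choose k * partialMatchings (n + 1 - k))
  have pascal (j : ℕ) :
      crossMatchings m (n + 1) (j + 1) = m * crossMatchings (m - 1) n j + g (j + 1) := by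
    simp only [crossMatchings, g]
    rw [Nat.choose_succ_succ', descFactorial_succ_eq_mul, show m - (j + 1) = m - 1 - j by omega,
      show n + 1 - (j + 1) = n - j by omega]
    ring
  have hg (k : ℕ) : g k = crossMatchings m n k + n * crossMatchings m (n - 1) k := by
    simp only [g, crossMatchings]
    rw [choose_mul_partialMatchings_succ_sub]
    ring
  calc sumCrossMatchings m (n + 1)
      = m * sumCrossMatchings (m - 1) n + ∑ k ∈ range (n + 2), g k := by
        rw [sumCrossMatchings, sum_range_succ', sum_congr rfl fun j _ => pascal j,
          sum_add_distrib, ← mul_sum, sum_range_succ' g]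
        simp [crossMatchings, g, sumCrossMatchings, add_assoc]
    _ = _ := by
        rw [sum_congr rfl fun k _ => hg k, sum_add_distrib, ← mul_sum,
          sum_range_crossMatchings (by omega), sum_range_crossMatchings (by omega)]
        ring

theorem partialMatchings_add (m n : ℕ) :
    partialMatchings (m + n) = sumCrossMatchings m n := by
  induction n using Nat.strong_induction_on generalizing m with
  | _ n ih =>
  rcases n with _ | n
  · simp [sumCrossMatchings, crossMatchings, show partialMatchings 0 = 1 from rfl]
  · have hm : m * partialMatchings (m - 1 + n) = m * partialMatchings (m + n - 1) := by
      rcases m with _ | m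
      · simp
      · congr 2; omega
    have hn : n * partialMatchings (m + (n - 1)) = n * partialMatchings (m + n - 1) := by
      rcases n with _ | n
      · simp
      · rfl
    rw [sumCrossMatchings_succ, ← ih n (by omega), ← ih n (by omega),
      ← ih (n - 1) (by omega), ← add_assoc, partialMatchings_succ, hm, hn]
    ring

/-- `I(2n) = ∑_{k=0}^{n} k! · C(n,k)² · I(n−k)²`. -/
theorem stmt11 (n : ℕ) :
    partialMatchings (2 * n)
      = ∑ k ∈ Finset.range (n + 1),
          k.factorial * (n.choose k) ^ 2 * (partialMatchings (n - k)) ^ 2 := by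
  rw [two_mul, partialMatchings_add, sumCrossMatchings]
  refine sum_congr rfl fun k _ => ?_
  rw [crossMatchings, Nat.descFactorial_eq_factorial_mul_choose]
  ring
end

section
/- For all natural numbers n and k with k ≤ n, the number of pairs (ρ, D), where ρ is a set partition of an n-element set, D is a k-element subset of the set of blocks of ρ, and every block of ρ not belonging to D has at least 2 elements, equals ∑_{s=0}^{k} C(n,s) · ∑_{j=k−s}^{⌊(n−s)/2⌋} C(j, k−s) · T(n−s, j), where C denotes the binomial coefficient and T(a,b) denotes the number of set partitions of an a-element set into exactly b blocks each of cardinality at least 2. -/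
open Finset

/-- `T(a,b)`: the number of set partitions of an `a`-element set into exactly `b` nonempty
blocks, each of cardinality at least `2`. -/
noncomputable def noSingletonStirling (a b : ℕ) : ℕ :=
  Nat.card {P : Finpartition (Finset.univ : Finset (Fin a)) //
    P.parts.card = b ∧ ∀ t ∈ P.parts, 2 ≤ t.card}

section transfer
variable {m n : ℕ}

-- forward map
def fwdPart (f : Fin m ↪ Fin n) (t : Finset (Fin n)) (hmem : ∀ i, f i ∈ t)
    (hsurj : ∀ y ∈ t, ∃ i, f i = y)
    (P : Finpartition (Finset.univ : Finset (Fin m))) : Finpartition t where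
  parts := P.parts.image (fun a => a.image f)
  supIndep := by
    rw [Finset.supIndep_iff_pairwiseDisjoint]
    intro x hx y hy hxy
    simp only [coe_image, Set.mem_image, mem_coe] at hx hy
    obtain ⟨a, ha, rfl⟩ := hx
    obtain ⟨b, hb, rfl⟩ := hy
    have hne : a ≠ b := fun e => hxy (by rw [e])
    exact (Finset.disjoint_image f.injective).2 (P.disjoint ha hb hne)
  sup_parts := by
    ext y
    simp only [Finset.mem_sup, Finset.mem_image, id]
    constructor
    · rintro ⟨v, ⟨a, ha, rfl⟩, hy⟩
      obtain ⟨x, -, rfl⟩ := Finset.mem_image.1 hy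
      exact hmem x
    · intro hy
      obtain ⟨i, rfl⟩ := hsurj y hy
      obtain ⟨a, ha, hia⟩ := P.exists_mem (mem_univ i)
      exact ⟨a.image f, ⟨a, ha, rfl⟩, Finset.mem_image_of_mem f hia⟩
  bot_notMem := by
    simp only [bot_eq_empty, Finset.mem_image]
    rintro ⟨a, ha, hae⟩
    rw [Finset.image_eq_empty] at hae
    subst hae; exact P.bot_notMem ha

def bwdPart (f : Fin m ↪ Fin n) (t : Finset (Fin n)) (hmem : ∀ i, f i ∈ t)
    (hsurj : ∀ y ∈ t, ∃ i, f i = y)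
    (Q : Finpartition t) : Finpartition (Finset.univ : Finset (Fin m)) where
  parts := Q.parts.image (fun b => Finset.univ.filter fun x => f x ∈ b)
  supIndep := by
    rw [Finset.supIndep_iff_pairwiseDisjoint]
    intro x hx y hy hxy
    simp only [coe_image, Set.mem_image, mem_coe] at hx hy
    obtain ⟨a, ha, rfl⟩ := hx
    obtain ⟨b, hb, rfl⟩ := hy
    have hne : a ≠ b := fun e => hxy (by rw [e])
    simp only [id, Finset.disjoint_left, Finset.mem_filter]
    rintro z ⟨-, hza⟩ ⟨-, hzb⟩
    exact hne (Q.eq_of_mem_parts ha hb hza hzb)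
  sup_parts := by
    ext x
    simp only [Finset.mem_sup, Finset.mem_image, mem_univ, iff_true, id]
    obtain ⟨b, hb, hxb⟩ := Q.exists_mem (hmem x)
    exact ⟨_, ⟨b, hb, rfl⟩, by simp [hxb]⟩
  bot_notMem := by
    simp only [bot_eq_empty, Finset.mem_image]
    rintro ⟨b, hb, hbe⟩
    obtain ⟨y, hy⟩ := Q.nonempty_of_mem_parts hb
    obtain ⟨i, rfl⟩ := hsurj y ((Q.le hb) hy)
    have : i ∈ Finset.univ.filter fun x => f x ∈ b := by simp [hy]
    rw [hbe] at this
    exact absurd this (Finset.notMem_empty i)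

lemma fwd_bwd (f : Fin m ↪ Fin n) (t : Finset (Fin n)) (hmem : ∀ i, f i ∈ t)
    (hsurj : ∀ y ∈ t, ∃ i, f i = y) (Q : Finpartition t) :
    fwdPart f t hmem hsurj (bwdPart f t hmem hsurj Q) = Q := by
  apply Finpartition.ext
  show (Q.parts.image _).image _ = Q.parts
  rw [Finset.image_image]
  have : ∀ b ∈ Q.parts, ((Finset.univ.filter fun x => f x ∈ b).image f) = b := by
    intro b hb
    ext y
    simp only [Finset.mem_image, Finset.mem_filter, mem_univ, true_and]
    constructor
    · rintro ⟨x, hx, rfl⟩; exact hx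
    · intro hy
      obtain ⟨i, rfl⟩ := hsurj y ((Q.le hb) hy)
      exact ⟨i, hy, rfl⟩
  calc Q.parts.image _ = Q.parts.image id := Finset.image_congr (fun b hb => this b hb)
    _ = Q.parts := Finset.image_id

lemma bwd_fwd (f : Fin m ↪ Fin n) (t : Finset (Fin n)) (hmem : ∀ i, f i ∈ t)
    (hsurj : ∀ y ∈ t, ∃ i, f i = y) (P : Finpartition (Finset.univ : Finset (Fin m))) :
    bwdPart f t hmem hsurj (fwdPart f t hmem hsurj P) = P := by
  apply Finpartition.ext
  show (P.parts.image _).image _ = P.parts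
  rw [Finset.image_image]
  have : ∀ a ∈ P.parts, (Finset.univ.filter fun x => f x ∈ a.image f) = a := by
    intro a _
    ext x
    simp [Finset.mem_image, f.injective.eq_iff]
  calc P.parts.image _ = P.parts.image id := Finset.image_congr (fun a ha => this a ha)
    _ = P.parts := Finset.image_id

lemma fwd_parts_card (f : Fin m ↪ Fin n) (t : Finset (Fin n)) (hmem : ∀ i, f i ∈ t)
    (hsurj : ∀ y ∈ t, ∃ i, f i = y) (P : Finpartition (Finset.univ : Finset (Fin m))) :
    (fwdPart f t hmem hsurj P).parts.card = P.parts.card :=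
  Finset.card_image_of_injective _ (Finset.image_injective f.injective)

lemma count_partitions_of_card {n m : ℕ} (t : Finset (Fin n)) (h : t.card = m) (j : ℕ) :
    Nat.card {P : Finpartition t // P.parts.card = j ∧ ∀ b ∈ P.parts, 2 ≤ b.card}
      = noSingletonStirling m j := by
  classical
  set f : Fin m ↪ Fin n := (t.orderEmbOfFin h).toEmbedding with hf
  have hmem : ∀ i, f i ∈ t := fun i => Finset.orderEmbOfFin_mem t h i
  have hsurj : ∀ y ∈ t, ∃ i, f i = y := by
    intro y hy
    have := Finset.range_orderEmbOfFin t h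
    have : y ∈ Set.range (t.orderEmbOfFin h) := by rw [this]; exact hy
    obtain ⟨i, hi⟩ := this
    exact ⟨i, hi⟩
  rw [noSingletonStirling]
  apply Nat.card_congr
  refine ⟨fun Q => ⟨bwdPart f t hmem hsurj Q.1, ?_⟩, fun P => ⟨fwdPart f t hmem hsurj P.1, ?_⟩,
    fun Q => Subtype.ext (fwd_bwd f t hmem hsurj Q.1), fun P => Subtype.ext (bwd_fwd f t hmem hsurj P.1)⟩
  · constructor
    · have h2 := fwd_parts_card f t hmem hsurj (bwdPart f t hmem hsurj Q.1)
      rw [fwd_bwd] at h2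
      rw [← h2]; exact Q.2.1
    · intro a ha
      have ha' : a.image f ∈ (fwdPart f t hmem hsurj (bwdPart f t hmem hsurj Q.1)).parts :=
        Finset.mem_image_of_mem _ ha
      rw [fwd_bwd] at ha'
      have := Q.2.2 _ ha'
      rwa [Finset.card_image_of_injective _ f.injective] at this
  · constructor
    · rw [fwd_parts_card]; exact P.2.1
    · intro b hb
      obtain ⟨a, ha, rfl⟩ := Finset.mem_image.1 hb
      rw [Finset.card_image_of_injective _ f.injective]
      exact P.2.2 a ha

lemma noSingletonStirling_eq_zero {m j : ℕ} (h : m < 2 * j) : noSingletonStirling m j = 0 := by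
  rw [noSingletonStirling, Nat.card_eq_zero]
  left
  constructor
  rintro ⟨P, hP1, hP2⟩
  have h1 : ∑ b ∈ P.parts, b.card = m := by
    rw [P.sum_card_parts]; simp
  have h2 : 2 * j ≤ ∑ b ∈ P.parts, b.card := by
    calc 2 * j = ∑ _b ∈ P.parts, 2 := by rw [Finset.sum_const, hP1]; ring
    _ ≤ _ := Finset.sum_le_sum hP2
  omega

end transfer

lemma countB (n k s : ℕ) (S : Finset (Fin n)) (hcard : S.card = s) :
    Nat.card {q : Finpartition (Sᶜ : Finset (Fin n)) × Finset (Finset (Fin n)) //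
        (∀ b ∈ q.1.parts, 2 ≤ b.card) ∧ q.2 ⊆ q.1.parts ∧ q.2.card = k - s}
      = ∑ j ∈ Finset.Icc (k - s) ((n - s) / 2),
          j.choose (k - s) * noSingletonStirling (n - s) j := by
  classical
  have hSc : (Sᶜ : Finset (Fin n)).card = n - s := by
    rw [Finset.card_compl, Fintype.card_fin, hcard]
  set r := k - s with hr
  rw [Nat.card_eq_fintype_card, Fintype.card_subtype]
  rw [Finset.card_eq_sum_card_fiberwise
    (f := Prod.fst) (t := Finset.univ) (fun p _ => Finset.mem_univ p.1)]
  have inner : ∀ σ : Finpartition (Sᶜ : Finset (Fin n)),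
      ((Finset.univ.filter fun q : Finpartition (Sᶜ : Finset (Fin n)) × Finset (Finset (Fin n)) =>
          (∀ b ∈ q.1.parts, 2 ≤ b.card) ∧ q.2 ⊆ q.1.parts ∧ q.2.card = r).filter
        fun p => p.1 = σ).card
      = if (∀ b ∈ σ.parts, 2 ≤ b.card) then (σ.parts.card).choose r else 0 := by
    intro σ
    split_ifs with hgood
    · rw [← Finset.card_powersetCard]
      apply Finset.card_nbij (i := Prod.snd)
      · rintro ⟨ρ, E⟩ hp
        simp only [Finset.mem_coe, Finset.mem_filter, Finset.mem_univ, true_and] at hp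
        obtain ⟨⟨-, hE1, hE2⟩, rfl⟩ := hp
        exact Finset.mem_powersetCard.2 ⟨hE1, hE2⟩
      · rintro ⟨ρ1, E1⟩ hp1 ⟨ρ2, E2⟩ hp2 hE
        simp only [Finset.coe_filter, Set.mem_setOf_eq, Finset.mem_univ, true_and] at hp1 hp2
        simp only at hE
        simp [hE, hp1.2, hp2.2]
      · intro E hE
        simp only [Finset.mem_coe, Finset.mem_powersetCard] at hE
        have hm : (σ, E) ∈ (Finset.univ.filter
            fun q : Finpartition (Sᶜ : Finset (Fin n)) × Finset (Finset (Fin n)) =>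
              (∀ b ∈ q.1.parts, 2 ≤ b.card) ∧ q.2 ⊆ q.1.parts ∧ q.2.card = r).filter
            (fun p => p.1 = σ) := by
          simp only [Finset.mem_filter, Finset.mem_univ, true_and]
          exact ⟨⟨hgood, hE.1, hE.2⟩, trivial⟩
        exact ⟨(σ, E), Finset.mem_coe.2 hm, rfl⟩
    · rw [Finset.card_eq_zero, Finset.filter_eq_empty_iff]
      rintro ⟨ρ, E⟩ hp
      simp only [Finset.mem_filter, Finset.mem_univ, true_and] at hp
      intro h1
      simp only at h1
      exact hgood (h1 ▸ hp.1)
  rw [Finset.sum_congr rfl (fun σ _ => inner σ)]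
  rw [Finset.sum_ite, Finset.sum_const_zero, add_zero]
  have maps : ∀ σ ∈ (Finset.univ.filter
      fun σ : Finpartition (Sᶜ : Finset (Fin n)) => ∀ b ∈ σ.parts, 2 ≤ b.card),
      σ.parts.card ∈ Finset.range (n + 1) := by
    intro σ _
    rw [Finset.mem_range, Nat.lt_succ_iff]
    calc σ.parts.card ≤ (Sᶜ : Finset (Fin n)).card := σ.card_parts_le_card
      _ ≤ n := by omega
  rw [← Finset.sum_fiberwise_of_maps_to' maps (fun j => j.choose r)]
  have fib : ∀ j, ((Finset.univ.filter
      fun σ : Finpartition (Sᶜ : Finset (Fin n)) => ∀ b ∈ σ.parts, 2 ≤ b.card).filter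
        fun σ => σ.parts.card = j).card = noSingletonStirling (n - s) j := by
    intro j
    rw [Finset.filter_filter, ← Fintype.card_subtype, ← Nat.card_eq_fintype_card]
    rw [← count_partitions_of_card Sᶜ hSc j]
    exact Nat.card_congr (Equiv.subtypeEquivRight (fun _ => and_comm))
  have step : ∀ j ∈ Finset.range (n + 1),
      (∑ _σ ∈ (Finset.univ.filter
        fun σ : Finpartition (Sᶜ : Finset (Fin n)) => ∀ b ∈ σ.parts, 2 ≤ b.card).filter
          (fun σ => σ.parts.card = j), j.choose r)
      = j.choose r * noSingletonStirling (n - s) j := by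
    intro j _
    rw [Finset.sum_const, fib j, smul_eq_mul, mul_comm]
  rw [Finset.sum_congr rfl step]
  symm
  apply Finset.sum_subset
  · intro j hj
    rw [Finset.mem_Icc] at hj
    rw [Finset.mem_range, Nat.lt_succ_iff]
    omega
  · intro j hj hj2
    rw [Finset.mem_Icc, not_and_or, not_le, not_le] at hj2
    rcases hj2 with h | h
    · rw [Nat.choose_eq_zero_of_lt h, zero_mul]
    · rw [noSingletonStirling_eq_zero (by omega), mul_zero]

section fiber
variable {n k : ℕ} {S : Finset (Fin n)}

/-- The partition of `Sᶜ` given by the non-singleton blocks. -/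
def toBig (S : Finset (Fin n)) (ρ : Finpartition (Finset.univ : Finset (Fin n)))
    (hsing : ∀ x : Fin n, ({x} : Finset (Fin n)) ∈ ρ.parts ↔ x ∈ S) :
    Finpartition (Sᶜ : Finset (Fin n)) :=
  ρ.ofSubset (Finset.filter_subset (fun b => 2 ≤ b.card) ρ.parts) (by
    ext y
    simp only [Finset.mem_sup, Finset.mem_filter, Finset.mem_compl, id]
    constructor
    · rintro ⟨b, ⟨hb, hb2⟩, hyb⟩ hyS
      have := ρ.eq_of_mem_parts hb ((hsing y).2 hyS) hyb (Finset.mem_singleton_self y)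
      rw [this] at hb2
      simp at hb2
    · intro hyS
      obtain ⟨b, hb, hyb⟩ := ρ.exists_mem (Finset.mem_univ y)
      refine ⟨b, ⟨hb, ?_⟩, hyb⟩
      rcases Nat.lt_or_ge b.card 2 with h | h
      · interval_cases h' : b.card
        · exact absurd (Finset.card_eq_zero.1 h') (ρ.nonempty_of_mem_parts hb).ne_empty
        · obtain ⟨a, ha⟩ := Finset.card_eq_one.1 h'
          rw [ha, Finset.mem_singleton] at hyb
          subst hyb
          exact absurd ((hsing y).1 (ha ▸ hb)) hyS
      · exact h)

lemma toBig_parts (S : Finset (Fin n)) (ρ : Finpartition (Finset.univ : Finset (Fin n)))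
    (hsing : ∀ x : Fin n, ({x} : Finset (Fin n)) ∈ ρ.parts ↔ x ∈ S) :
    (toBig S ρ hsing).parts = ρ.parts.filter (fun b => 2 ≤ b.card) := rfl

/-- Adjoin singletons of `S` to a partition of `Sᶜ`. -/
def ofSmall (S : Finset (Fin n)) (σ : Finpartition (Sᶜ : Finset (Fin n))) :
    Finpartition (Finset.univ : Finset (Fin n)) where
  parts := σ.parts ∪ S.image (fun x => ({x} : Finset (Fin n)))
  supIndep := by
    rw [Finset.supIndep_iff_pairwiseDisjoint]
    intro u hu v hv huv
    simp only [Finset.coe_union, Set.mem_union, Finset.mem_coe, Finset.coe_image,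
      Set.mem_image] at hu hv
    have hsub : ∀ b ∈ σ.parts, ∀ x ∈ S, x ∉ b := by
      intro b hb x hx hxb
      have := (σ.le hb) hxb
      rw [Finset.mem_compl] at this
      exact this hx
    rcases hu with hu | ⟨x, hx, rfl⟩ <;> rcases hv with hv | ⟨y, hy, rfl⟩
    · exact σ.disjoint hu hv huv
    · exact Finset.disjoint_singleton_right.2 (hsub u hu y hy)
    · exact Finset.disjoint_singleton_left.2 (hsub v hv x hx)
    · refine Finset.disjoint_singleton_left.2 ?_
      simp only [id]
      rw [Finset.mem_singleton]
      rintro rfl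
      exact huv rfl
  sup_parts := by
    rw [Finset.sup_union, σ.sup_parts]
    have : (S.image (fun x => ({x} : Finset (Fin n)))).sup id = S := by
      ext y
      simp only [Finset.mem_sup, Finset.mem_image, id]
      constructor
      · rintro ⟨v, ⟨x, hx, rfl⟩, hyv⟩
        rwa [Finset.mem_singleton.1 hyv]
      · intro hy
        exact ⟨{y}, ⟨y, hy, rfl⟩, Finset.mem_singleton_self y⟩
    rw [this]
    ext z
    simp [Finset.mem_union, em]
  bot_notMem := by
    simp only [bot_eq_empty, Finset.mem_union, Finset.mem_image, not_or]
    refine ⟨σ.bot_notMem, ?_⟩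
    rintro ⟨x, -, hx⟩
    exact Finset.singleton_ne_empty x hx

lemma ofSmall_sing (S : Finset (Fin n)) (σ : Finpartition (Sᶜ : Finset (Fin n)))
    (hgood : ∀ b ∈ σ.parts, 2 ≤ b.card) (x : Fin n) :
    ({x} : Finset (Fin n)) ∈ (ofSmall S σ).parts ↔ x ∈ S := by
  simp only [ofSmall, Finset.mem_union, Finset.mem_image]
  constructor
  · rintro (h | ⟨y, hy, hyx⟩)
    · have := hgood _ h
      simp at this
    · rwa [← Finset.singleton_injective hyx]
  · intro hx
    exact Or.inr ⟨x, hx, rfl⟩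

end fiber

section recon
variable {n k : ℕ} {S : Finset (Fin n)}

lemma sing_sub (ρ : Finpartition (Finset.univ : Finset (Fin n))) (D : Finset (Finset (Fin n)))
    (hbig : ∀ b ∈ ρ.parts, b ∉ D → 2 ≤ b.card)
    (hsing : ∀ x : Fin n, ({x} : Finset (Fin n)) ∈ ρ.parts ↔ x ∈ S) :
    S.image (fun x => ({x} : Finset (Fin n))) ⊆ D := by
  intro b hb
  obtain ⟨x, hx, rfl⟩ := Finset.mem_image.1 hb
  by_contra hbD
  have := hbig _ ((hsing x).2 hx) hbD
  simp at this

lemma filter_neg_eq (ρ : Finpartition (Finset.univ : Finset (Fin n)))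
    (D : Finset (Finset (Fin n))) (hD : D ⊆ ρ.parts)
    (hbig : ∀ b ∈ ρ.parts, b ∉ D → 2 ≤ b.card)
    (hsing : ∀ x : Fin n, ({x} : Finset (Fin n)) ∈ ρ.parts ↔ x ∈ S) :
    D.filter (fun b => ¬ 2 ≤ b.card) = S.image (fun x => ({x} : Finset (Fin n))) := by
  apply Finset.Subset.antisymm
  · intro b hb
    rw [Finset.mem_filter] at hb
    obtain ⟨hbD, hb2⟩ := hb
    have hbp := hD hbD
    have hne := ρ.nonempty_of_mem_parts hbp
    have hb1 : b.card = 1 := by have := Finset.card_pos.2 hne; omega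
    obtain ⟨x, rfl⟩ := Finset.card_eq_one.1 hb1
    exact Finset.mem_image.2 ⟨x, (hsing x).1 hbp, rfl⟩
  · intro b hb
    rw [Finset.mem_filter]
    refine ⟨sing_sub ρ D hbig hsing hb, ?_⟩
    obtain ⟨x, hx, rfl⟩ := Finset.mem_image.1 hb
    simp

lemma D_split (ρ : Finpartition (Finset.univ : Finset (Fin n)))
    (D : Finset (Finset (Fin n))) (hD : D ⊆ ρ.parts)
    (hbig : ∀ b ∈ ρ.parts, b ∉ D → 2 ≤ b.card)
    (hsing : ∀ x : Fin n, ({x} : Finset (Fin n)) ∈ ρ.parts ↔ x ∈ S) :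
    D.filter (fun b => 2 ≤ b.card) ∪ S.image (fun x => ({x} : Finset (Fin n))) = D := by
  conv_rhs => rw [← Finset.filter_union_filter_not_eq (fun b => 2 ≤ b.card) D]
  rw [filter_neg_eq ρ D hD hbig hsing]

lemma E_card (ρ : Finpartition (Finset.univ : Finset (Fin n)))
    (D : Finset (Finset (Fin n))) (hD : D ⊆ ρ.parts) (hDk : D.card = k)
    (hbig : ∀ b ∈ ρ.parts, b ∉ D → 2 ≤ b.card)
    (hsing : ∀ x : Fin n, ({x} : Finset (Fin n)) ∈ ρ.parts ↔ x ∈ S) :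
    (D.filter (fun b => 2 ≤ b.card)).card = k - S.card := by
  have h1 := Finset.card_filter_add_card_filter_not (s := D) (p := fun b => 2 ≤ b.card)
  rw [filter_neg_eq ρ D hD hbig hsing,
    Finset.card_image_of_injective S Finset.singleton_injective, hDk] at h1
  omega

lemma S_card_le (ρ : Finpartition (Finset.univ : Finset (Fin n)))
    (D : Finset (Finset (Fin n))) (hD : D ⊆ ρ.parts) (hDk : D.card = k)
    (hbig : ∀ b ∈ ρ.parts, b ∉ D → 2 ≤ b.card)
    (hsing : ∀ x : Fin n, ({x} : Finset (Fin n)) ∈ ρ.parts ↔ x ∈ S) :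
    S.card ≤ k := by
  have := Finset.card_le_card (sing_sub ρ D hbig hsing)
  rwa [Finset.card_image_of_injective S Finset.singleton_injective, hDk] at this

end recon

lemma fiber_card (n k : ℕ) (S : Finset (Fin n)) (hS : S.card ≤ k) :
    Nat.card {p : Finpartition (Finset.univ : Finset (Fin n)) × Finset (Finset (Fin n)) //
        (p.2 ⊆ p.1.parts ∧ p.2.card = k ∧ ∀ b ∈ p.1.parts, b ∉ p.2 → 2 ≤ b.card) ∧
        Finset.univ.filter (fun x => ({x} : Finset (Fin n)) ∈ p.1.parts) = S}
      = Nat.card {q : Finpartition (Sᶜ : Finset (Fin n)) × Finset (Finset (Fin n)) //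
        (∀ b ∈ q.1.parts, 2 ≤ b.card) ∧ q.2 ⊆ q.1.parts ∧ q.2.card = k - S.card} := by
  classical
  have hsing_of : ∀ ρ : Finpartition (Finset.univ : Finset (Fin n)),
      Finset.univ.filter (fun x => ({x} : Finset (Fin n)) ∈ ρ.parts) = S →
      ∀ x : Fin n, ({x} : Finset (Fin n)) ∈ ρ.parts ↔ x ∈ S := by
    intro ρ h x
    rw [← h]
    simp
  apply Nat.card_congr
  refine
    { toFun := fun p =>
        ⟨(toBig S p.1.1 (hsing_of p.1.1 p.2.2), p.1.2.filter (fun b => 2 ≤ b.card)), ?_, ?_, ?_⟩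
      invFun := fun q =>
        ⟨(ofSmall S q.1.1, q.1.2 ∪ S.image (fun x => ({x} : Finset (Fin n)))),
          ⟨?_, ?_, ?_⟩, ?_⟩
      left_inv := ?_
      right_inv := ?_ }
  · -- all blocks of toBig are big
    intro b hb
    rw [toBig_parts] at hb
    exact (Finset.mem_filter.1 hb).2
  · -- E ⊆ σ.parts
    rw [toBig_parts]
    exact Finset.filter_subset_filter _ p.2.1.1
  · -- E.card
    exact E_card p.1.1 p.1.2 p.2.1.1 p.2.1.2.1 p.2.1.2.2 (hsing_of p.1.1 p.2.2)
  · -- D ⊆ parts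
    refine Finset.union_subset ?_ ?_
    · exact fun b hb => Finset.mem_union_left _ (q.2.2.1 hb)
    · exact fun b hb => Finset.mem_union_right _ hb
  · -- D.card = k
    have hdis : Disjoint q.1.2 (S.image (fun x => ({x} : Finset (Fin n)))) := by
      rw [Finset.disjoint_left]
      intro b hb hb'
      obtain ⟨x, -, rfl⟩ := Finset.mem_image.1 hb'
      have := q.2.1 _ (q.2.2.1 hb)
      simp at this
    rw [Finset.card_union_of_disjoint hdis, q.2.2.2,
      Finset.card_image_of_injective S Finset.singleton_injective]
    omega
  · -- non-D blocks big
    intro b hb hbD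
    rcases Finset.mem_union.1 hb with hb' | hb'
    · exact q.2.1 _ hb'
    · exact absurd (Finset.mem_union_right _ hb') hbD
  · -- singleton set = S
    ext x
    simp only [Finset.mem_filter, Finset.mem_univ, true_and]
    exact ofSmall_sing S q.1.1 q.2.1 x
  · -- left inverse
    rintro ⟨⟨ρ, D⟩, hp⟩
    apply Subtype.ext
    apply Prod.ext
    · apply Finpartition.ext
      show (ρ.parts.filter (fun b => 2 ≤ b.card)) ∪ _ = ρ.parts
      exact D_split ρ ρ.parts (Finset.Subset.refl _) (fun b hb hb' => absurd hb hb')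
        (hsing_of ρ hp.2)
    · show (D.filter (fun b => 2 ≤ b.card)) ∪ _ = D
      exact D_split ρ D hp.1.1 hp.1.2.2 (hsing_of ρ hp.2)
  · -- right inverse
    rintro ⟨⟨σ, E⟩, hq⟩
    apply Subtype.ext
    apply Prod.ext
    · apply Finpartition.ext
      rw [toBig_parts]
      show ((σ.parts ∪ S.image fun x => ({x} : Finset (Fin n))).filter
        fun b => 2 ≤ b.card) = σ.parts
      rw [Finset.filter_union, Finset.filter_true_of_mem hq.1,
        Finset.filter_false_of_mem (fun b hb => by
          obtain ⟨x, -, rfl⟩ := Finset.mem_image.1 hb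
          simp), Finset.union_empty]
    · show ((E ∪ S.image fun x => ({x} : Finset (Fin n))).filter fun b => 2 ≤ b.card) = E
      rw [Finset.filter_union, Finset.filter_true_of_mem (fun b hb => hq.1 _ (hq.2.1 hb)),
        Finset.filter_false_of_mem (fun b hb => by
          obtain ⟨x, -, rfl⟩ := Finset.mem_image.1 hb
          simp), Finset.union_empty]

lemma fiber_empty (n k : ℕ) (S : Finset (Fin n)) (hS : k < S.card) :
    Nat.card {p : Finpartition (Finset.univ : Finset (Fin n)) × Finset (Finset (Fin n)) //
        (p.2 ⊆ p.1.parts ∧ p.2.card = k ∧ ∀ b ∈ p.1.parts, b ∉ p.2 → 2 ≤ b.card) ∧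
        Finset.univ.filter (fun x => ({x} : Finset (Fin n)) ∈ p.1.parts) = S} = 0 := by
  rw [Nat.card_eq_zero]
  left
  constructor
  rintro ⟨⟨ρ, D⟩, ⟨hD, hDk, hbig⟩, hfil⟩
  have hsing : ∀ x : Fin n, ({x} : Finset (Fin n)) ∈ ρ.parts ↔ x ∈ S := by
    intro x; rw [← hfil]; simp
  have := S_card_le ρ D hD hDk hbig hsing
  omega

/-- The number of pairs `(ρ, D)` of a set partition `ρ` of an `n`-element set together with a
`k`-element subset `D` of its blocks such that every block not in `D` has at least `2` elements
equals `∑_{s=0}^{k} C(n,s) · ∑_{j=k−s}^{⌊(n−s)/2⌋} C(j, k−s) · T(n−s, j)`. -/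
theorem stmt17 (n k : ℕ) (hk : k ≤ n) :
    Nat.card {p : Finpartition (Finset.univ : Finset (Fin n)) × Finset (Finset (Fin n)) //
        p.2 ⊆ p.1.parts ∧ p.2.card = k ∧ ∀ b ∈ p.1.parts, b ∉ p.2 → 2 ≤ b.card}
      = ∑ s ∈ Finset.range (k + 1),
          n.choose s * ∑ j ∈ Finset.Icc (k - s) ((n - s) / 2),
            j.choose (k - s) * noSingletonStirling (n - s) j := by
  classical
  set F : ℕ → ℕ := fun s => if s ≤ k then
      ∑ j ∈ Finset.Icc (k - s) ((n - s) / 2),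
        j.choose (k - s) * noSingletonStirling (n - s) j
    else 0 with hF
  set P : Finpartition (Finset.univ : Finset (Fin n)) × Finset (Finset (Fin n)) → Prop :=
    fun p => p.2 ⊆ p.1.parts ∧ p.2.card = k ∧ ∀ b ∈ p.1.parts, b ∉ p.2 → 2 ≤ b.card with hP
  set g : Finpartition (Finset.univ : Finset (Fin n)) × Finset (Finset (Fin n)) →
      Finset (Fin n) :=
    fun p => Finset.univ.filter (fun x => ({x} : Finset (Fin n)) ∈ p.1.parts) with hg
  have fiberF : ∀ S : Finset (Fin n),
      Nat.card {p : Finpartition (Finset.univ : Finset (Fin n)) × Finset (Finset (Fin n)) //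
        P p ∧ g p = S} = F S.card := by
    intro S
    rcases le_or_gt S.card k with h | h
    · rw [hF]
      simp only [h, if_true]
      rw [fiber_card n k S h, countB n k S.card S rfl]
    · rw [hF]
      simp only [not_le.2 h, if_false]
      exact fiber_empty n k S h
  rw [Nat.card_eq_fintype_card, Fintype.card_subtype]
  rw [Finset.card_eq_sum_card_fiberwise (f := g) (t := Finset.univ)
    (fun p _ => Finset.mem_univ (g p))]
  have inner : ∀ S : Finset (Fin n),
      ((Finset.univ.filter P).filter (fun p => g p = S)).card = F S.card := by
    intro S
    rw [Finset.filter_filter, ← Fintype.card_subtype, ← Nat.card_eq_fintype_card]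
    exact fiberF S
  rw [Finset.sum_congr rfl (fun S _ => inner S)]
  have maps : ∀ S ∈ (Finset.univ : Finset (Finset (Fin n))),
      S.card ∈ Finset.range (n + 1) := by
    intro S _
    rw [Finset.mem_range, Nat.lt_succ_iff]
    have := Finset.card_le_univ S
    rwa [Fintype.card_fin] at this
  rw [← Finset.sum_fiberwise_of_maps_to' maps F]
  have count_s : ∀ s, ((Finset.univ : Finset (Finset (Fin n))).filter
      (fun S => S.card = s)).card = n.choose s := by
    intro s
    have : ((Finset.univ : Finset (Finset (Fin n))).filter (fun S => S.card = s))
        = (Finset.univ : Finset (Fin n)).powersetCard s := by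
      ext E
      simp [Finset.mem_powersetCard]
    rw [this, Finset.card_powersetCard, Finset.card_univ, Fintype.card_fin]
  have step : ∀ s ∈ Finset.range (n + 1),
      (∑ _S ∈ (Finset.univ : Finset (Finset (Fin n))).filter (fun S => S.card = s), F s)
        = n.choose s * F s := by
    intro s _
    rw [Finset.sum_const, count_s s, smul_eq_mul]
  rw [Finset.sum_congr rfl step]
  rw [← Finset.sum_subset (Finset.range_subset_range.2 (by omega) :
      Finset.range (k + 1) ⊆ Finset.range (n + 1))
    (fun s _ hs => by
      rw [Finset.mem_range, Nat.lt_succ_iff, not_le] at hs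
      rw [hF]
      simp only [not_le.2 hs, if_false, mul_zero])]
  apply Finset.sum_congr rfl
  intro s hs
  rw [Finset.mem_range, Nat.lt_succ_iff] at hs
  rw [hF]
  simp only [hs, if_true]
end
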